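/- Every positive semidefinite operator ρ of rank two on ℂ² ⊗ ℂ² annihilates some nonzero product vector: there exist nonzero α, β ∈ ℂ² with ρ(α ⊗ β) = 0. -/

import Mathlib

/-!
The null space of `ρ` is two-dimensional. Identify `ℂ² ⊗ ℂ²` with `2 × 2` matrices: the product
vectors are exactly the nonzero matrices of determinant zero. On the span of two independent null
vectors `v, w` the determinant is the binary quadratic form `(x, y) ↦ det (x v + y w)`, which has a
nontrivial zero over `ℂ`; that zero is a product vector annihilated by `ρ`.
-/

open Matrix ComplexOrder Module Polynomial

theorem Matrix.rank_add_finrank_ker_mulVecLin {m n K : Type*} [Fintype m] [Fintype n]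
    [DecidableEq n] [Field K] (A : Matrix m n K) :
    A.rank + finrank K (LinearMap.ker A.mulVecLin) = Fintype.card n := by
  rw [Matrix.rank, LinearMap.finrank_range_add_finrank_ker, Module.finrank_fintype_fun_eq_card]

section ProductVector

variable {K : Type*} [Field K]

theorem exists_binaryQuadratic_eq_zero [IsAlgClosed K] (a b c : K) :
    ∃ x y : K, ¬(x = 0 ∧ y = 0) ∧ a * x ^ 2 + b * x * y + c * y ^ 2 = 0 := by
  by_cases ha : a = 0
  · exact ⟨1, 0, by simp, by simp [ha]⟩
  obtain ⟨x, hx⟩ := IsAlgClosed.exists_root (C a * X ^ 2 + C b * X + C c)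
    (by rw [degree_quadratic ha]; decide)
  exact ⟨x, 1, by simp, by simpa using hx⟩

theorem exists_eq_mul_of_minors_eq_zero {ι κ : Type*} {u : ι × κ → K} (hu : u ≠ 0)
    (h : ∀ i j k l, u (i, j) * u (k, l) = u (i, l) * u (k, j)) :
    ∃ (α : ι → K) (β : κ → K), α ≠ 0 ∧ β ≠ 0 ∧ u = fun p => α p.1 * β p.2 := by
  obtain ⟨⟨i₀, j₀⟩, h₀⟩ := Function.ne_iff.mp hu
  replace h₀ : u (i₀, j₀) ≠ 0 := h₀
  refine ⟨fun i => u (i, j₀), fun j => u (i₀, j) / u (i₀, j₀),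
    Function.ne_iff.mpr ⟨i₀, h₀⟩, Function.ne_iff.mpr ⟨j₀, by simpa using h₀⟩, ?_⟩
  ext ⟨i, j⟩
  rw [mul_div_assoc', eq_div_iff h₀]
  exact h i j i₀ j₀

theorem minors_eq_zero_of_det_fin_two {R : Type*} [CommRing R] {u : Fin 2 × Fin 2 → R}
    (h : u (0, 0) * u (1, 1) = u (0, 1) * u (1, 0)) :
    ∀ i j k l, u (i, j) * u (k, l) = u (i, l) * u (k, j) := by
  intro i j k l
  fin_cases i <;> fin_cases j <;> fin_cases k <;> fin_cases l <;>
    simp only [Fin.zero_eta, Fin.mk_one] <;> first | ring | linear_combination h | linear_combination -h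

theorem Submodule.exists_mul_mem_of_two_le_finrank [IsAlgClosed K]
    (W : Submodule K (Fin 2 × Fin 2 → K)) (hW : 2 ≤ finrank K W) :
    ∃ α β : Fin 2 → K, α ≠ 0 ∧ β ≠ 0 ∧ (fun p => α p.1 * β p.2) ∈ W := by
  have : Nontrivial W := Module.nontrivial_of_finrank_pos (R := K) (by omega)
  obtain ⟨v, hv⟩ := exists_ne (0 : W)
  obtain ⟨w, hvw⟩ := exists_linearIndependent_pair_of_one_lt_finrank (R := K) (by omega) hv
  set a : Fin 2 × Fin 2 → K := v.1
  set b : Fin 2 × Fin 2 → K := w.1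
  obtain ⟨x, y, hxy, hq⟩ := exists_binaryQuadratic_eq_zero
    (a (0, 0) * a (1, 1) - a (0, 1) * a (1, 0))
    (a (0, 0) * b (1, 1) + b (0, 0) * a (1, 1) - a (0, 1) * b (1, 0) - b (0, 1) * a (1, 0))
    (b (0, 0) * b (1, 1) - b (0, 1) * b (1, 0))
  set u := x • a + y • b
  have hu : u ≠ 0 := fun h0 => hxy (LinearIndependent.pair_iff.mp hvw x y (Subtype.ext h0))
  have hdet : u (0, 0) * u (1, 1) = u (0, 1) * u (1, 0) := by
    simp only [u, Pi.add_apply, Pi.smul_apply, smul_eq_mul]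
    linear_combination hq
  obtain ⟨α, β, hα, hβ, hαβ⟩ :=
    exists_eq_mul_of_minors_eq_zero hu (minors_eq_zero_of_det_fin_two hdet)
  exact ⟨α, β, hα, hβ, hαβ ▸ W.add_mem (W.smul_mem x v.2) (W.smul_mem y w.2)⟩

end ProductVector

theorem stmt13 (ρ : Matrix (Fin 2 × Fin 2) (Fin 2 × Fin 2) ℂ)
    (hrank : ρ.rank = 2) :
    ∃ α β : Fin 2 → ℂ, α ≠ 0 ∧ β ≠ 0 ∧ ρ *ᵥ (fun p => α p.1 * β p.2) = 0 := by
  have hker : 2 ≤ finrank ℂ (LinearMap.ker ρ.mulVecLin) := by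
    have := ρ.rank_add_finrank_ker_mulVecLin
    simp only [Fintype.card_prod, Fintype.card_fin] at this
    omega
  exact (LinearMap.ker ρ.mulVecLin).exists_mul_mem_of_two_le_finrank hker
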